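/- cov(M) ≤ d_⋔, where cov(M) is the least cardinality of a family of meager subsets of 2^ω covering 2^ω and d_⋔ is the least cardinality of a ⋔-dominating family in 2^ω. -/

import Mathlib

open Filter Set Cardinal Topology

/-- The interval partition of ℕ with |Iₙ| = 2^(n+1): Iₙ = [2^(n+1) - 2, 2^(n+2) - 2). -/
def intervalI (n : ℕ) : Set ℕ := Set.Ico (2 ^ (n + 1) - 2) (2 ^ (n + 2) - 2)

/-- f ⋔ g iff for all but finitely many k, f↾Iₖ ≠ g↾Iₖ. -/
def Fork (f g : ℕ → Bool) : Prop := ∀ᶠ k in atTop, ∃ j ∈ intervalI k, f j ≠ g j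

/-!
For a fixed `f`, the set of `x` with `x ⋔ f` is meagre: it is the union over `N` of the closed
sets of those `x` that differ from `f` on every block `Iₖ` with `k ≥ N`, and each of these has
dense complement, because overwriting `x` by `f` on `Iₖ` gives points outside it that converge to
`x` as `k → ∞` (every coordinate lies in only finitely many blocks). Hence a `⋔`-dominating family
`D` yields the cover `{{x | x ⋔ f} | f ∈ D}` of `2^ω` by at most `#D` meagre sets.
-/

section Blocks

variable {ι α : Type*} [TopologicalSpace α] (I : ℕ → Set ι)

def differsOnBlocksFrom (N : ℕ) (f : ι → α) : Set (ι → α) :=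
  {x | ∀ k ≥ N, ∃ j ∈ I k, x j ≠ f j}

theorem isClosed_differsOnBlocksFrom [DiscreteTopology α] (hI : ∀ k, (I k).Finite) (N : ℕ)
    (f : ι → α) : IsClosed (differsOnBlocksFrom I N f) := by
  have : differsOnBlocksFrom I N f = ⋂ k ≥ N, ⋃ j ∈ I k, (fun x : ι → α => x j) ⁻¹' {f j}ᶜ := by
    ext x
    simp [differsOnBlocksFrom]
  rw [this]
  exact isClosed_biInter fun k _ => (hI k).isClosed_biUnion fun j _ =>
    (isClosed_discrete _).preimage (continuous_apply j)

theorem tendsto_piecewise_blocks (hI : ∀ j, ∀ᶠ k in atTop, j ∉ I k) (f x : ι → α)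
    [∀ k, DecidablePred (· ∈ I k)] :
    Tendsto (fun k => (I k).piecewise f x) atTop (𝓝 x) :=
  tendsto_pi_nhds.2 fun j => tendsto_const_nhds.congr' <|
    (hI j).mono fun _ hj => (Set.piecewise_eq_of_notMem _ _ _ hj).symm

theorem dense_compl_differsOnBlocksFrom (hI : ∀ j, ∀ᶠ k in atTop, j ∉ I k) (N : ℕ)
    (f : ι → α) : Dense (differsOnBlocksFrom I N f)ᶜ := by
  classical
  intro x
  refine mem_closure_of_tendsto (tendsto_piecewise_blocks I hI f x) ?_
  filter_upwards [eventually_ge_atTop N] with k hk hdiff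
  obtain ⟨j, hj, hne⟩ := hdiff k hk
  exact hne (Set.piecewise_eq_of_mem _ _ _ hj)

theorem isMeagre_setOf_eventually_exists_ne [DiscreteTopology α] (hfin : ∀ k, (I k).Finite)
    (hI : ∀ j, ∀ᶠ k in atTop, j ∉ I k) (f : ι → α) :
    IsMeagre {x : ι → α | ∀ᶠ k in atTop, ∃ j ∈ I k, x j ≠ f j} := by
  have : {x : ι → α | ∀ᶠ k in atTop, ∃ j ∈ I k, x j ≠ f j} = ⋃ N, differsOnBlocksFrom I N f := by
    ext x
    simp [eventually_atTop, differsOnBlocksFrom]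
  rw [this]
  refine isMeagre_iUnion fun N => IsNowhereDense.isMeagre ?_
  rw [(isClosed_differsOnBlocksFrom I hfin N f).isNowhereDense_iff,
    interior_eq_empty_iff_dense_compl]
  exact dense_compl_differsOnBlocksFrom I hI N f

end Blocks

theorem le_two_pow_succ_sub_two (k : ℕ) : k ≤ 2 ^ (k + 1) - 2 := by
  have := k.lt_two_pow_self
  rw [pow_succ]
  omega

theorem two_pow_succ_sub_two_mem_intervalI (n : ℕ) : 2 ^ (n + 1) - 2 ∈ intervalI n := by
  have h1 : 2 ≤ 2 ^ (n + 1) := Nat.le_self_pow (by omega) 2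
  have h2 : 2 ^ (n + 1) < 2 ^ (n + 2) := Nat.pow_lt_pow_right (by norm_num) (by omega)
  exact ⟨le_rfl, by omega⟩

theorem eventually_notMem_intervalI (j : ℕ) : ∀ᶠ k in atTop, j ∉ intervalI k := by
  filter_upwards [eventually_gt_atTop j] with k hk hj
  have := le_two_pow_succ_sub_two k
  exact absurd hj.1 (by omega)

theorem isMeagre_setOf_fork (f : ℕ → Bool) : IsMeagre {x | Fork x f} :=
  isMeagre_setOf_eventually_exists_ne intervalI (fun _ => Set.finite_Ico _ _)
    eventually_notMem_intervalI f

theorem fork_not (x : ℕ → Bool) : Fork x fun n => !x n :=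
  .of_forall fun k => ⟨_, two_pow_succ_sub_two_mem_intervalI k, by simp⟩

/-- cov(M) ≤ d_⋔ on Cantor space. -/
theorem stmt9 :
    sInf {c : Cardinal | ∃ 𝒜 : Set (Set (ℕ → Bool)), #𝒜 = c ∧
        (∀ A ∈ 𝒜, IsMeagre A) ∧ ⋃₀ 𝒜 = Set.univ} ≤
      sInf {c : Cardinal | ∃ D : Set (ℕ → Bool), #D = c ∧
        ∀ x : ℕ → Bool, ∃ f ∈ D, Fork x f} := by
  refine le_csInf ⟨_, univ, rfl, fun x => ⟨_, mem_univ _, fork_not x⟩⟩ ?_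
  rintro _ ⟨D, rfl, hD⟩
  let 𝒜 := (fun f => {x | Fork x f}) '' D
  have h𝒜 : #𝒜 ∈ {c : Cardinal | ∃ 𝒜 : Set (Set (ℕ → Bool)), #𝒜 = c ∧
      (∀ A ∈ 𝒜, IsMeagre A) ∧ ⋃₀ 𝒜 = Set.univ} := by
    refine ⟨𝒜, rfl, ?_, eq_univ_of_forall fun x => ?_⟩
    · rintro _ ⟨f, -, rfl⟩
      exact isMeagre_setOf_fork f
    · obtain ⟨f, hf, hxf⟩ := hD x
      exact ⟨_, mem_image_of_mem _ hf, hxf⟩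
  exact (csInf_le' h𝒜).trans mk_image_le
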